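/- arXiv:1909.11159 — 3 statements merged into one kernel-verified Lean document; each statement's English description precedes it below -/
import Mathlib

section
/- An SITL formula φ is satisfiable (there exists x : ℝ≥0 → ℝⁿ with (x,0) ⊨ φ) if and only if there exists a Boolean signal d : ℝ≥0 → 𝔹^M with (d,0) ⊨ Pr(φ) such that at each time t the valuation d(t) is predicate-consistent, i.e., there exists z ∈ ℝⁿ with (h_i(z) ≥ 0 ↔ proj_{p_i}(d(t)) = ⊤) for all i. -/
open scoped NNReal

/-- MITL syntax over propositions `P`, with interval-constrained until. -/
inductive MITL (P : Type) where
  | tt : MITL P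
  | atom : P → MITL P
  | not : MITL P → MITL P
  | and : MITL P → MITL P → MITL P
  | untl : Set ℝ≥0 → MITL P → MITL P → MITL P

/-- Continuous-time MITL semantics over Boolean signals `d : ℝ≥0 → P → Bool`. -/
def MITL.sat {P : Type} (d : ℝ≥0 → P → Bool) : MITL P → ℝ≥0 → Prop
  | .tt, _ => True
  | .atom p, t => d t p = true
  | .not φ, t => ¬ MITL.sat d φ t
  | .and φ ψ, t => MITL.sat d φ t ∧ MITL.sat d ψ t
  | .untl I φ ψ, t => ∃ t'' ∈ (fun s => t + s) '' I,
      MITL.sat d ψ t'' ∧ ∀ t' ∈ Set.Ioo t t'', MITL.sat d φ t'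

/-- Disjunction `φ ∨ ψ := ¬(¬φ ∧ ¬ψ)`. -/
def MITL.or {P : Type} (φ ψ : MITL P) : MITL P := .not (.and (.not φ) (.not ψ))

/-- Eventually `F_I φ := ⊤ U_I φ`. -/
def MITL.ev {P : Type} (I : Set ℝ≥0) (φ : MITL P) : MITL P := .untl I .tt φ

/-- Always `G_I φ := ¬ F_I ¬φ`. -/
def MITL.alw {P : Type} (I : Set ℝ≥0) (φ : MITL P) : MITL P := .not (.ev I (.not φ))

/-- SITL semantics: the same syntax interpreted over real-valued signals
`x : ℝ≥0 → ℝⁿ`, where atom `i` (predicate `μ_i`) holds at `t` iff `h i (x t) ≥ 0`. -/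
def SITL.sat {M n : ℕ} (h : Fin M → (Fin n → ℝ) → ℝ) (x : ℝ≥0 → Fin n → ℝ) :
    MITL (Fin M) → ℝ≥0 → Prop
  | .tt, _ => True
  | .atom i, t => 0 ≤ h i (x t)
  | .not φ, t => ¬ SITL.sat h x φ t
  | .and φ ψ, t => SITL.sat h x φ t ∧ SITL.sat h x ψ t
  | .untl I φ ψ, t => ∃ t'' ∈ (fun s => t + s) '' I,
      SITL.sat h x ψ t'' ∧ ∀ t' ∈ Set.Ioo t t'', SITL.sat h x φ t'

/-! SITL semantics along `x` is MITL semantics of the Boolean signal recording which predicates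
hold along `x`. A predicate-consistent `d` is exactly that signal for a signal `x` obtained by choosing,
at each time, a point `x t` realizing `d t`. -/

noncomputable def SITL.valuation {M n : ℕ} (h : Fin M → (Fin n → ℝ) → ℝ) (x : ℝ≥0 → Fin n → ℝ) :
    ℝ≥0 → Fin M → Bool :=
  fun t i => decide (0 ≤ h i (x t))

theorem SITL.sat_iff_sat_valuation {M n : ℕ} (h : Fin M → (Fin n → ℝ) → ℝ)
    (x : ℝ≥0 → Fin n → ℝ) (φ : MITL (Fin M)) (t : ℝ≥0) :
    SITL.sat h x φ t ↔ MITL.sat (SITL.valuation h x) φ t := by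
  induction φ generalizing t with
  | tt => rfl
  | atom i => simp [SITL.sat, MITL.sat, SITL.valuation]
  | not φ ih => simp only [SITL.sat, MITL.sat, ih]
  | and φ ψ ihφ ihψ => simp only [SITL.sat, MITL.sat, ihφ, ihψ]
  | untl I φ ψ ihφ ihψ => simp only [SITL.sat, MITL.sat, ihφ, ihψ]

theorem SITL.valuation_eq_of_forall_iff {M n : ℕ} {h : Fin M → (Fin n → ℝ) → ℝ}
    {x : ℝ≥0 → Fin n → ℝ} {d : ℝ≥0 → Fin M → Bool}
    (hd : ∀ t i, (0 ≤ h i (x t) ↔ d t i = true)) :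
    SITL.valuation h x = d := by
  funext t i
  rw [SITL.valuation, Bool.eq_iff_iff, decide_eq_true_iff]
  exact hd t i

/-- An SITL formula `φ` is satisfiable iff there is a Boolean signal `d` with
`(d,0) ⊨ Pr(φ)` whose valuation is predicate-consistent at every time, i.e. at each `t`
some `z ∈ ℝⁿ` realizes exactly the truth values `d(t)`. -/
theorem sitl_satisfiable_iff {M n : ℕ} (h : Fin M → (Fin n → ℝ) → ℝ)
    (φ : MITL (Fin M)) :
    (∃ x : ℝ≥0 → Fin n → ℝ, SITL.sat h x φ 0) ↔
      (∃ d : ℝ≥0 → Fin M → Bool, MITL.sat d φ 0 ∧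
        ∀ t, ∃ z : Fin n → ℝ, ∀ i, (0 ≤ h i z ↔ d t i = true)) := by
  constructor
  · rintro ⟨x, hx⟩
    refine ⟨SITL.valuation h x, (SITL.sat_iff_sat_valuation h x φ 0).mp hx, fun t => ⟨x t, ?_⟩⟩
    simp [SITL.valuation]
  · rintro ⟨d, hd, hconsistent⟩
    choose z hz using hconsistent
    refine ⟨z, (SITL.sat_iff_sat_valuation h z φ 0).mpr ?_⟩
    rwa [SITL.valuation_eq_of_forall_iff hz]
end

section
/- Clock region equivalence is preserved under time elapse in the following sense: if c ∼ c' (region equivalence with maximal constant C), then for every τ ≥ 0 there exists τ' ≥ 0 such that c + τ·𝟙 ∼ c' + τ'·𝟙, where 𝟙 is the all-ones vector. -/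
open scoped NNReal

/-- Clock region equivalence with maximal constant `C` on clock valuations in `ℝ≥0^O`:
(1) integer parts agree, or both clocks exceed `C`; (2) the ordering of fractional parts
agrees among clocks not exceeding `C`; (3) zero-ness of fractional parts agrees for clocks
not exceeding `C`. -/
def regEquiv (O C : ℕ) (c c' : Fin O → ℝ≥0) : Prop :=
  (∀ o, (⌊(c o : ℝ)⌋ = ⌊(c' o : ℝ)⌋) ∨ ((C : ℝ) < c o ∧ (C : ℝ) < c' o)) ∧
  (∀ o o', (c o : ℝ) ≤ C → (c o' : ℝ) ≤ C →
    (Int.fract (c o : ℝ) ≤ Int.fract (c o' : ℝ) ↔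
      Int.fract (c' o : ℝ) ≤ Int.fract (c' o' : ℝ))) ∧
  (∀ o, (c o : ℝ) ≤ C → (Int.fract (c o : ℝ) = 0 ↔ Int.fract (c' o : ℝ) = 0))

lemma floor_fract_step (x : ℝ) (n : ℕ) (G : ℝ) (hG0 : 0 ≤ G) (hG1 : G < 1) :
    (⌊x + ((n : ℝ) + G)⌋ = ⌊x⌋ + n + (if 1 ≤ Int.fract x + G then 1 else 0)) ∧
    Int.fract (x + ((n : ℝ) + G)) =
      Int.fract x + G - (if 1 ≤ Int.fract x + G then 1 else 0) := by
  have hfx0 := Int.fract_nonneg x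
  have hfx1 := Int.fract_lt_one x
  have hd : Int.fract x = x - ⌊x⌋ := rfl
  have e : x + ((n : ℝ) + G) = (x + G) + (n : ℕ) := by ring
  have hfl : ⌊x + G⌋ = ⌊x⌋ + (if 1 ≤ Int.fract x + G then 1 else 0) := by
    split_ifs with hw
    · rw [Int.floor_eq_iff]
      constructor <;> push_cast <;> linarith
    · rw [Int.floor_eq_iff]
      constructor <;> push_cast <;> linarith
  have hfl2 : ⌊x + ((n : ℝ) + G)⌋ = ⌊x⌋ + n + (if 1 ≤ Int.fract x + G then 1 else 0) := by
    rw [e, Int.floor_add_natCast, hfl]; ring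
  refine ⟨hfl2, ?_⟩
  have hh : Int.fract (x + ((n : ℝ) + G)) = (x + ((n:ℝ) + G)) - ⌊x + ((n:ℝ)+G)⌋ := rfl
  rw [hh, hfl2]
  split_ifs <;> push_cast <;> linarith

lemma regEquiv_key (O C : ℕ) (c c' : Fin O → ℝ≥0) (h : regEquiv O C c c')
    (n : ℕ) (F t' : ℝ) (hF0 : 0 < F) (hF1 : F < 1) (ht'0 : 0 < t') (ht'1 : t' < 1)
    (hwrap : ∀ o, (c o : ℝ) ≤ C →
      (1 - F ≤ Int.fract (c o : ℝ) ↔ t' ≤ Int.fract (c' o : ℝ)))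
    (hland : ∀ o, (c o : ℝ) ≤ C →
      (Int.fract (c o : ℝ) = 1 - F ↔ Int.fract (c' o : ℝ) = t'))
    (τ τ' : ℝ≥0) (hτ : (τ : ℝ) = n + F) (hτ' : (τ' : ℝ) = n + (1 - t')) :
    regEquiv O C (fun o => c o + τ) (fun o => c' o + τ') := by
  obtain ⟨h1, h2, h3⟩ := h
  have hF'0 : (0:ℝ) < 1 - t' := by linarith
  have hF'1 : (1:ℝ) - t' < 1 := by linarith
  have S : ∀ o : Fin O, _ := fun o => floor_fract_step (c o : ℝ) n F hF0.le hF1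
  have S' : ∀ o : Fin O, _ := fun o => floor_fract_step (c' o : ℝ) n (1 - t') hF'0.le hF'1
  have W : ∀ o, (c o : ℝ) ≤ C →
      ((1 ≤ Int.fract (c o : ℝ) + F) ↔ (1 ≤ Int.fract (c' o : ℝ) + (1 - t'))) := by
    intro o ho
    have := hwrap o ho
    constructor <;> intro hh
    · linarith [this.mp (by linarith)]
    · linarith [this.mpr (by linarith)]
  refine ⟨?_, ?_, ?_⟩
  · intro o
    simp only [NNReal.coe_add, hτ, hτ']
    by_cases ho : (c o : ℝ) ≤ C
    · left
      have hfe : ⌊(c o : ℝ)⌋ = ⌊(c' o : ℝ)⌋ :=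
        (h1 o).resolve_right (fun hc => absurd hc.1 (not_lt.2 ho))
      rw [(S o).1, (S' o).1, hfe]
      by_cases hw : 1 ≤ Int.fract (c o : ℝ) + F
      · rw [if_pos hw, if_pos ((W o ho).mp hw)]
      · rw [if_neg hw, if_neg (fun hh => hw ((W o ho).mpr hh))]
    · right
      push_neg at ho
      have hc' : (C : ℝ) ≤ c' o := by
        rcases h1 o with hfe | hb
        · have h1' : ((C:ℕ):ℤ) ≤ ⌊(c o : ℝ)⌋ := Int.le_floor.mpr (by push_cast; linarith)
          have h2' := Int.floor_le (c' o : ℝ)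
          rw [hfe] at h1'
          calc (C:ℝ) = (((C:ℕ):ℤ):ℝ) := by push_cast; ring
          _ ≤ (⌊(c' o : ℝ)⌋ : ℝ) := by exact_mod_cast h1'
          _ ≤ c' o := h2'
        · exact hb.2.le
      have hn0 : (0:ℝ) ≤ n := Nat.cast_nonneg n
      constructor <;> linarith
  · intro o o' ho ho'
    simp only [NNReal.coe_add, hτ, hτ'] at ho ho' ⊢
    have hτpos : (0:ℝ) ≤ (n:ℝ) + F := by positivity
    have hco : (c o : ℝ) ≤ C := by linarith
    have hco' : (c o' : ℝ) ≤ C := by linarith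
    rw [(S o).2, (S o').2, (S' o).2, (S' o').2]
    have hord := h2 o o' hco hco'
    have b1 := Int.fract_nonneg (c o : ℝ); have b2 := Int.fract_lt_one (c o : ℝ)
    have b3 := Int.fract_nonneg (c o' : ℝ); have b4 := Int.fract_lt_one (c o' : ℝ)
    have b5 := Int.fract_nonneg (c' o : ℝ); have b6 := Int.fract_lt_one (c' o : ℝ)
    have b7 := Int.fract_nonneg (c' o' : ℝ); have b8 := Int.fract_lt_one (c' o' : ℝ)
    by_cases hw : 1 ≤ Int.fract (c o : ℝ) + F <;>
      by_cases hw' : 1 ≤ Int.fract (c o' : ℝ) + F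
    · rw [if_pos hw, if_pos hw', if_pos ((W o hco).mp hw), if_pos ((W o' hco').mp hw')]
      constructor <;> intro hh
      · linarith [hord.mp (by linarith)]
      · linarith [hord.mpr (by linarith)]
    · rw [if_pos hw, if_neg hw', if_pos ((W o hco).mp hw),
        if_neg (fun hh => hw' ((W o' hco').mpr hh))]
      constructor <;> intro _ <;> linarith
    · rw [if_neg hw, if_pos hw', if_neg (fun hh => hw ((W o hco).mpr hh)),
        if_pos ((W o' hco').mp hw')]
      constructor <;> intro hh <;> [exact absurd hh (by push_neg; linarith);
        exact absurd hh (by push_neg; linarith)]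
    · rw [if_neg hw, if_neg hw', if_neg (fun hh => hw ((W o hco).mpr hh)),
        if_neg (fun hh => hw' ((W o' hco').mpr hh))]
      constructor <;> intro hh
      · linarith [hord.mp (by linarith)]
      · linarith [hord.mpr (by linarith)]
  · intro o ho
    simp only [NNReal.coe_add, hτ, hτ'] at ho ⊢
    have hτpos : (0:ℝ) ≤ (n:ℝ) + F := by positivity
    have hco : (c o : ℝ) ≤ C := by linarith
    rw [(S o).2, (S' o).2]
    have b1 := Int.fract_nonneg (c o : ℝ)
    have b5 := Int.fract_nonneg (c' o : ℝ)
    have hl := hland o hco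
    by_cases hw : 1 ≤ Int.fract (c o : ℝ) + F
    · rw [if_pos hw, if_pos ((W o hco).mp hw)]
      constructor <;> intro hh
      · linarith [hl.mp (by linarith)]
      · linarith [hl.mpr (by linarith)]
    · rw [if_neg hw, if_neg (fun hh => hw ((W o hco).mpr hh))]
      constructor <;> intro hh <;> linarith

/-- Region equivalence is preserved under time elapse: if `c ∼ c'` then for every delay
`τ ≥ 0` there is a delay `τ' ≥ 0` with `c + τ·𝟙 ∼ c' + τ'·𝟙`. -/
theorem regEquiv_time_elapse (O C : ℕ) (c c' : Fin O → ℝ≥0)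
    (h : regEquiv O C c c') (τ : ℝ≥0) :
    ∃ τ' : ℝ≥0, regEquiv O C (fun o => c o + τ) (fun o => c' o + τ') := by
  classical
  have h1 := h.1
  have h2 := h.2.1
  have h3 := h.2.2
  set F := Int.fract (τ : ℝ) with hFdef
  have hF0 : 0 ≤ F := Int.fract_nonneg _
  have hF1 : F < 1 := Int.fract_lt_one _
  set n : ℕ := ⌊(τ:ℝ)⌋.toNat with hndef
  have hfl0 : (0:ℤ) ≤ ⌊(τ:ℝ)⌋ := Int.floor_nonneg.mpr τ.coe_nonneg
  have hτn : (τ:ℝ) = (n:ℝ) + F := by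
    have ha : ((n:ℤ)) = ⌊(τ:ℝ)⌋ := Int.toNat_of_nonneg hfl0
    have hb : F = (τ:ℝ) - ⌊(τ:ℝ)⌋ := rfl
    have hc : ((n:ℝ)) = (⌊(τ:ℝ)⌋:ℝ) := by exact_mod_cast congrArg (Int.cast : ℤ → ℝ) ha
    linarith
  by_cases hFz : F = 0
  · refine ⟨τ, ?_, ?_, ?_⟩
    · intro o
      simp only [NNReal.coe_add]
      rcases h1 o with hfe | hb
      · left
        rw [hτn, hFz, add_zero, Int.floor_add_natCast, Int.floor_add_natCast, hfe]
      · right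
        have := τ.coe_nonneg
        exact ⟨by linarith [hb.1], by linarith [hb.2]⟩
    · intro o o' ho ho'
      simp only [NNReal.coe_add] at ho ho' ⊢
      have := τ.coe_nonneg
      have hco : (c o : ℝ) ≤ C := by linarith
      have hco' : (c o' : ℝ) ≤ C := by linarith
      rw [hτn, hFz, add_zero, Int.fract_add_natCast, Int.fract_add_natCast, Int.fract_add_natCast,
        Int.fract_add_natCast]
      exact h2 o o' hco hco'
    · intro o ho
      simp only [NNReal.coe_add] at ho ⊢
      have := τ.coe_nonneg
      have hco : (c o : ℝ) ≤ C := by linarith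
      rw [hτn, hFz, add_zero, Int.fract_add_natCast, Int.fract_add_natCast]
      exact h3 o hco
  · have hFpos : 0 < F := lt_of_le_of_ne hF0 (Ne.symm hFz)
    by_cases hpiv : ∃ o, (c o:ℝ) ≤ C ∧ Int.fract (c o:ℝ) = 1 - F
    · obtain ⟨o₀, ho₀C, ho₀⟩ := hpiv
      set t' := Int.fract (c' o₀ : ℝ) with ht'def
      have ht'1 : t' < 1 := Int.fract_lt_one _
      have ht'0 : 0 < t' := by
        rcases lt_or_eq_of_le (Int.fract_nonneg (c' o₀ : ℝ)) with hlt | heq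
        · exact hlt
        · exfalso
          have hz := (h3 o₀ ho₀C).mpr heq.symm
          rw [ho₀] at hz; linarith
      have hn0 : (0:ℝ) ≤ n := Nat.cast_nonneg n
      refine ⟨⟨(n:ℝ) + (1 - t'), by linarith⟩, ?_⟩
      refine regEquiv_key O C c c' h n F t' hFpos hF1 ht'0 ht'1 ?_ ?_ τ _ hτn rfl
      · intro o ho
        rw [← ho₀]
        exact h2 o₀ o ho₀C ho
      · intro o ho
        constructor
        · intro he
          have hle1 : Int.fract (c o₀ : ℝ) ≤ Int.fract (c o : ℝ) := by rw [ho₀, he]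
          have hle2 : Int.fract (c o : ℝ) ≤ Int.fract (c o₀ : ℝ) := by rw [ho₀, he]
          exact le_antisymm ((h2 o o₀ ho ho₀C).mp hle2) ((h2 o₀ o ho₀C ho).mp hle1)
        · intro he
          have hle1 : Int.fract (c' o₀ : ℝ) ≤ Int.fract (c' o : ℝ) := by rw [he]
          have hle2 : Int.fract (c' o : ℝ) ≤ Int.fract (c' o₀ : ℝ) := by rw [he]
          have := le_antisymm ((h2 o o₀ ho ho₀C).mpr hle2) ((h2 o₀ o ho₀C ho).mpr hle1)
          rw [← ho₀]; exact this
    · push_neg at hpiv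
      set A : Finset ℝ := insert 0 ((Finset.univ.filter
        (fun o => (c o:ℝ) ≤ C ∧ Int.fract (c o:ℝ) < 1 - F)).image
          fun o => Int.fract (c' o:ℝ)) with hAdef
      set B : Finset ℝ := insert 1 ((Finset.univ.filter
        (fun o => (c o:ℝ) ≤ C ∧ 1 - F ≤ Int.fract (c o:ℝ))).image
          fun o => Int.fract (c' o:ℝ)) with hBdef
      have hAne : A.Nonempty := ⟨0, Finset.mem_insert_self _ _⟩
      have hBne : B.Nonempty := ⟨1, Finset.mem_insert_self _ _⟩
      have hsep : ∀ x ∈ A, ∀ y ∈ B, x < y := by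
        intro x hx y hy
        simp only [hAdef, hBdef, Finset.mem_insert, Finset.mem_image, Finset.mem_filter,
          Finset.mem_univ, true_and] at hx hy
        rcases hx with rfl | ⟨o', ⟨ho'C, ho'lt⟩, rfl⟩ <;>
          rcases hy with rfl | ⟨o, ⟨hoC, hoge⟩, rfl⟩
        · linarith
        · have hne := hpiv o hoC
          have hgt : 1 - F < Int.fract (c o:ℝ) := lt_of_le_of_ne hoge (Ne.symm hne)
          have hnz : Int.fract (c o:ℝ) ≠ 0 := by intro h0; rw [h0] at hgt; linarith
          have hnz' : Int.fract (c' o:ℝ) ≠ 0 := fun h0 => hnz ((h3 o hoC).mpr h0)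
          rcases lt_or_eq_of_le (Int.fract_nonneg (c' o:ℝ)) with hlt | heq
          · exact hlt
          · exact absurd heq.symm hnz'
        · exact Int.fract_lt_one _
        · have hno : ¬ (Int.fract (c o:ℝ) ≤ Int.fract (c o':ℝ)) := by push_neg; linarith
          have hno' : ¬ (Int.fract (c' o:ℝ) ≤ Int.fract (c' o':ℝ)) :=
            fun hh => hno ((h2 o o' hoC ho'C).mpr hh)
          push_neg at hno'; exact hno'
      set a := A.max' hAne with hadef
      set b := B.min' hBne with hbdef
      have hab : a < b := hsep a (A.max'_mem hAne) b (B.min'_mem hBne)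
      have ha0 : (0:ℝ) ≤ a := A.le_max' 0 (Finset.mem_insert_self _ _)
      have hb1 : b ≤ 1 := B.min'_le 1 (Finset.mem_insert_self _ _)
      set t' := (a + b) / 2 with ht'def
      have ht'0 : 0 < t' := by simp only [ht'def]; linarith
      have ht'1 : t' < 1 := by simp only [ht'def]; linarith
      have hn0 : (0:ℝ) ≤ n := Nat.cast_nonneg n
      refine ⟨⟨(n:ℝ) + (1 - t'), by linarith⟩, ?_⟩
      refine regEquiv_key O C c c' h n F t' hFpos hF1 ht'0 ht'1 ?_ ?_ τ _ hτn rfl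
      · intro o ho
        constructor
        · intro hge
          have hyB : Int.fract (c' o:ℝ) ∈ B := by
            rw [hBdef]
            exact Finset.mem_insert_of_mem (Finset.mem_image.mpr
              ⟨o, Finset.mem_filter.mpr ⟨Finset.mem_univ o, ho, hge⟩, rfl⟩)
          have := B.min'_le _ hyB
          simp only [ht'def]; linarith
        · intro hge
          by_contra hlt; push_neg at hlt
          have hxA : Int.fract (c' o:ℝ) ∈ A := by
            rw [hAdef]
            exact Finset.mem_insert_of_mem (Finset.mem_image.mpr
              ⟨o, Finset.mem_filter.mpr ⟨Finset.mem_univ o, ho, hlt⟩, rfl⟩)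
          have := A.le_max' _ hxA
          simp only [ht'def] at hge; linarith
      · intro o ho
        constructor
        · intro he; exact absurd he (hpiv o ho)
        · intro he; exfalso
          by_cases hge : 1 - F ≤ Int.fract (c o:ℝ)
          · have hyB : Int.fract (c' o:ℝ) ∈ B := by
              rw [hBdef]
              exact Finset.mem_insert_of_mem (Finset.mem_image.mpr
                ⟨o, Finset.mem_filter.mpr ⟨Finset.mem_univ o, ho, hge⟩, rfl⟩)
            have hthis : b ≤ Int.fract (c' o:ℝ) := B.min'_le _ hyB
            have he' : Int.fract (c' o:ℝ) = (a + b)/2 := he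
            linarith
          · push_neg at hge
            have hxA : Int.fract (c' o:ℝ) ∈ A := by
              rw [hAdef]
              exact Finset.mem_insert_of_mem (Finset.mem_image.mpr
                ⟨o, Finset.mem_filter.mpr ⟨Finset.mem_univ o, ho, hge⟩, rfl⟩)
            have hthis : Int.fract (c' o:ℝ) ≤ a := A.le_max' _ hxA
            have he' : Int.fract (c' o:ℝ) = (a + b)/2 := he
            linarith
end

section
/- Clock region equivalence is preserved under resets: if c ∼ c' and R : ℝ≥0^O → ℝ≥0^O is a reset map that sets a fixed subset of coordinates to 0 and leaves the others unchanged, then R(c) ∼ R(c'). -/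
open scoped NNReal

theorem regEquiv.fract_le_zero_iff {O C : ℕ} {c c' : Fin O → ℝ≥0} (h : regEquiv O C c c')
    {o : Fin O} (ho : (c o : ℝ) ≤ C) :
    Int.fract (c o : ℝ) ≤ 0 ↔ Int.fract (c' o : ℝ) ≤ 0 := by
  rw [(Int.fract_nonneg (c o : ℝ)).ge_iff_eq', (Int.fract_nonneg (c' o : ℝ)).ge_iff_eq']
  exact h.2.2 o ho

/-- Region equivalence is preserved under resets: resetting a fixed subset `Z` of the clocks
to `0` (leaving the others unchanged) preserves `∼`. -/
theorem regEquiv_reset (O C : ℕ) (c c' : Fin O → ℝ≥0)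
    (h : regEquiv O C c c') (Z : Set (Fin O)) [DecidablePred (· ∈ Z)] :
    regEquiv O C (fun o => if o ∈ Z then 0 else c o) (fun o => if o ∈ Z then 0 else c' o) := by
  refine ⟨fun o => ?_, fun o o' ho ho' => ?_, fun o ho => ?_⟩
  · by_cases hZ : o ∈ Z <;> simp [hZ, h.1 o]
  -- A reset clock has the least fractional part, so comparing with it only tests for zero.
  · by_cases hZ : o ∈ Z <;> by_cases hZ' : o' ∈ Z <;>
      simp only [hZ, hZ', if_true, if_false, NNReal.coe_zero, Int.fract_zero, Int.fract_nonneg,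
        iff_self] at ho ho' ⊢
    · exact h.fract_le_zero_iff ho
    · exact h.2.1 o o' ho ho'
  · by_cases hZ : o ∈ Z <;>
      simp only [hZ, if_true, if_false, NNReal.coe_zero, Int.fract_zero, iff_self] at ho ⊢
    exact h.2.2 o ho
end
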